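/- Tweedie's formula: Let X be a real random variable with |X| ≤ A a.s., N ~ N(0, σ²) independent of X, Y = X + N with density f_Y(y) = E[φ_σ(y − X)]. Then for every y ∈ ℝ, E[X | Y = y] = y + σ²·(d/dy) log f_Y(y). -/

import Mathlib

open MeasureTheory Real

noncomputable def gaussPdf (σ t : ℝ) : ℝ :=
  (Real.sqrt (2 * Real.pi * σ ^ 2))⁻¹ * Real.exp (-(t ^ 2) / (2 * σ ^ 2))

/-! Writing `f(u) = ∫ φ_σ(u - x) dμ(x)`, the Gaussian identity `φ_σ'(t) = -t φ_σ(t) / σ²`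
differentiated under the integral sign gives `σ² f'(y) = ∫ (x - y) φ_σ(y - x) dμ(x)`, and
dividing by `f(y) > 0` turns this into `σ² (log f)'(y) = E[X | Y = y] - y`. Differentiation
under the integral is legitimate because `t ↦ |t| φ_σ(t)` is bounded, by `|σ| / √(2πσ²)`. -/

lemma gaussPdf_pos {σ : ℝ} (hσ : σ ≠ 0) (t : ℝ) : 0 < gaussPdf σ t := by
  unfold gaussPdf
  positivity

lemma gaussPdf_nonneg (σ t : ℝ) : 0 ≤ gaussPdf σ t := by
  unfold gaussPdf
  positivity

lemma gaussPdf_le (σ t : ℝ) : gaussPdf σ t ≤ (√(2 * π * σ ^ 2))⁻¹ := by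
  unfold gaussPdf
  refine mul_le_of_le_one_right (by positivity) (exp_le_one_iff.mpr ?_)
  exact div_nonpos_of_nonpos_of_nonneg (neg_nonpos.mpr (by positivity)) (by positivity)

lemma abs_mul_gaussPdf_le {σ : ℝ} (hσ : σ ≠ 0) (t : ℝ) :
    |t| * gaussPdf σ t ≤ |σ| * (√(2 * π * σ ^ 2))⁻¹ := by
  have hσ' : 0 < |σ| := abs_pos.mpr hσ
  -- `s ≤ s ^ 2 / 2 + 1 ≤ exp (s ^ 2 / 2)` for `s = |t| / |σ|`
  have key : |t| ≤ |σ| * exp (t ^ 2 / (2 * σ ^ 2)) := by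
    have h := add_one_le_exp (t ^ 2 / (2 * σ ^ 2))
    rw [← sq_abs t, ← sq_abs σ] at h ⊢
    rw [← div_le_iff₀' hσ']
    refine le_trans ?_ h
    have : 0 ≤ (|t| / |σ| - 1) ^ 2 := sq_nonneg _
    field_simp at this ⊢
    nlinarith
  calc |t| * gaussPdf σ t = (√(2 * π * σ ^ 2))⁻¹ * (|t| / exp (t ^ 2 / (2 * σ ^ 2))) := by
        rw [gaussPdf, neg_div, exp_neg]; ring
    _ ≤ (√(2 * π * σ ^ 2))⁻¹ * |σ| := by gcongr; rwa [div_le_iff₀ (exp_pos _)]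
    _ = _ := mul_comm _ _

@[fun_prop]
lemma continuous_gaussPdf (σ : ℝ) : Continuous (gaussPdf σ) := by
  unfold gaussPdf
  fun_prop

lemma hasDerivAt_gaussPdf {σ : ℝ} (hσ : σ ≠ 0) (t : ℝ) :
    HasDerivAt (gaussPdf σ) (-t / σ ^ 2 * gaussPdf σ t) t := by
  have h := (((hasDerivAt_pow 2 t).neg.div_const (2 * σ ^ 2)).exp).const_mul
    (√(2 * π * σ ^ 2))⁻¹
  refine (h : HasDerivAt (gaussPdf σ) _ t).congr_deriv ?_
  simp only [gaussPdf, Pi.neg_apply]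
  field_simp
  ring

section Smoothing

variable (μ : Measure ℝ) [IsFiniteMeasure μ]

lemma integrable_gaussPdf_sub (σ u : ℝ) : Integrable (fun x => gaussPdf σ (u - x)) μ :=
  .of_bound (by fun_prop) _ (.of_forall fun x => by
    rw [norm_of_nonneg (gaussPdf_nonneg σ _)]; exact gaussPdf_le σ _)

lemma integrable_sub_mul_gaussPdf_sub {σ : ℝ} (hσ : σ ≠ 0) (u : ℝ) :
    Integrable (fun x => (x - u) * gaussPdf σ (u - x)) μ :=
  .of_bound (by fun_prop) _ (.of_forall fun x => by
    rw [norm_mul, norm_of_nonneg (gaussPdf_nonneg σ _), Real.norm_eq_abs, abs_sub_comm]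
    exact abs_mul_gaussPdf_le hσ _)

lemma integrable_mul_gaussPdf_sub {σ : ℝ} (hσ : σ ≠ 0) (u : ℝ) :
    Integrable (fun x => x * gaussPdf σ (u - x)) μ := by
  refine ((integrable_sub_mul_gaussPdf_sub μ hσ u).add
    ((integrable_gaussPdf_sub μ σ u).const_mul u)).congr (.of_forall fun x => ?_)
  simp only [Pi.add_apply]
  ring

lemma integral_gaussPdf_sub_pos [NeZero μ] {σ : ℝ} (hσ : σ ≠ 0) (u : ℝ) :
    0 < ∫ x, gaussPdf σ (u - x) ∂μ := by
  rw [integral_pos_iff_support_of_nonneg (fun x => gaussPdf_nonneg σ _)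
    (integrable_gaussPdf_sub μ σ u), Function.support_eq_univ fun x => (gaussPdf_pos hσ _).ne']
  exact Measure.measure_univ_pos.mpr (NeZero.ne μ)

lemma hasDerivAt_integral_gaussPdf_sub {σ : ℝ} (hσ : σ ≠ 0) (y : ℝ) :
    HasDerivAt (fun u => ∫ x, gaussPdf σ (u - x) ∂μ)
      ((∫ x, (x - y) * gaussPdf σ (y - x) ∂μ) / σ ^ 2) y := by
  have hF' (x u : ℝ) : HasDerivAt (fun u => gaussPdf σ (u - x))
      ((x - u) * gaussPdf σ (u - x) / σ ^ 2) u :=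
    ((hasDerivAt_gaussPdf hσ (u - x)).comp_sub_const u x).congr_deriv (by ring)
  have hbound (x u : ℝ) :
      ‖(x - u) * gaussPdf σ (u - x) / σ ^ 2‖ ≤ |σ| * (√(2 * π * σ ^ 2))⁻¹ / σ ^ 2 := by
    rw [norm_div, norm_mul, norm_of_nonneg (gaussPdf_nonneg σ _), Real.norm_eq_abs,
      Real.norm_eq_abs, abs_sub_comm, abs_of_pos (by positivity : 0 < σ ^ 2)]
    exact div_le_div_of_nonneg_right (abs_mul_gaussPdf_le hσ _) (by positivity)
  rw [← integral_div]
  exact (hasDerivAt_integral_of_dominated_loc_of_deriv_le Filter.univ_mem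
    (.of_forall fun u => (integrable_gaussPdf_sub μ σ u).aestronglyMeasurable)
    (integrable_gaussPdf_sub μ σ y)
    ((integrable_sub_mul_gaussPdf_sub μ hσ y).div_const _).aestronglyMeasurable
    (.of_forall fun x u _ => hbound x u) (integrable_const _)
    (.of_forall fun x u _ => hF' x u)).2

end Smoothing

theorem tweedie_formula_general
    (σ : ℝ) (hσ : 0 < σ)
    (μ : Measure ℝ) [IsProbabilityMeasure μ] :
    ∀ y : ℝ,
      (∫ x, x * gaussPdf σ (y - x) ∂μ) / (∫ x, gaussPdf σ (y - x) ∂μ)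
        = y + σ ^ 2 * deriv (fun u => Real.log (∫ x, gaussPdf σ (u - x) ∂μ)) y := by
  intro y
  have hf := (integral_gaussPdf_sub_pos μ hσ.ne' y).ne'
  have hsplit : ∫ x, (x - y) * gaussPdf σ (y - x) ∂μ
      = ∫ x, x * gaussPdf σ (y - x) ∂μ - y * ∫ x, gaussPdf σ (y - x) ∂μ := by
    simp only [sub_mul]
    rw [integral_sub (integrable_mul_gaussPdf_sub μ hσ.ne' y)
      ((integrable_gaussPdf_sub μ σ y).const_mul y), integral_const_mul]
  rw [((hasDerivAt_integral_gaussPdf_sub μ hσ.ne' y).log hf).deriv, hsplit]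
  field_simp
  ring

/-- Tweedie's formula: `E[X | Y = y] = y + σ² (d/dy) log f_Y(y)` for `Y = X + N`,
`N ~ N(0,σ²)`, with `|X| ≤ A` a.s. -/
theorem tweedie_formula
    (σ A : ℝ) (hσ : 0 < σ) (hA : 0 < A)
    (μ : Measure ℝ) [IsProbabilityMeasure μ] (hμ : ∀ᵐ x ∂μ, |x| ≤ A) :
    ∀ y : ℝ,
      (∫ x, x * gaussPdf σ (y - x) ∂μ) / (∫ x, gaussPdf σ (y - x) ∂μ)
        = y + σ ^ 2 * deriv (fun u => Real.log (∫ x, gaussPdf σ (u - x) ∂μ)) y :=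
  tweedie_formula_general σ hσ μ
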